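/- arXiv:2302.02152 — 5 statements merged into one kernel-verified Lean document; each statement's English description precedes it below -/
import Mathlib

section
/- In a digraph D of order n whose only OLD set is the whole vertex set (i.e., γ_OL(D) = n), every vertex is either domination-forced or location-forced. -/
open scoped symmDiff

/-- The open in-neighbourhood of `v` in the digraph `D` (loops allowed). -/
def Nin {V : Type*} (D : V → V → Prop) (v : V) : Set V := {u | D u v}

/-- A digraph is locatable if every vertex has positive in-degree and
open in-neighbourhoods are pairwise distinct. -/
def Locatable {V : Type*} (D : V → V → Prop) : Prop :=
  (∀ v, (Nin D v).Nonempty) ∧ ∀ x y, Nin D x = Nin D y → x = y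

/-- `S` is an open neighbourhood locating-dominating set of `D`. -/
def IsOLD {V : Type*} (D : V → V → Prop) (S : Set V) : Prop :=
  (∀ v, ∃ u ∈ S, D u v) ∧ ∀ x y, x ≠ y → ∃ s ∈ S, s ∈ Nin D x ∆ Nin D y

/-- The OLD number `γ_OL(D)`: minimum size of an OLD set. -/
noncomputable def oldNum {V : Type*} (D : V → V → Prop) : ℕ :=
  sInf {k | ∃ S : Set V, IsOLD D S ∧ S.ncard = k}

/-- `v` is domination-forced: it is the unique in-neighbour of some vertex. -/
def DomForced {V : Type*} (D : V → V → Prop) (v : V) : Prop := ∃ w, Nin D w = {v}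

/-- `v` is location-forced: some pair of distinct vertices has
in-neighbourhood symmetric difference `{v}`. -/
def LocForced {V : Type*} (D : V → V → Prop) (v : V) : Prop :=
  ∃ x y, x ≠ y ∧ Nin D x ∆ Nin D y = {v}

/-- The arc `xy` is a forcing arc. -/
def ForcingArc {V : Type*} (D : V → V → Prop) (x y : V) : Prop :=
  Nin D y = {x} ∨ ∃ z, Nin D y ∆ Nin D z = {x} ∧ x ∈ Nin D y

/-- The underlying simple undirected graph of a digraph. -/
def underlying {V : Type*} (D : V → V → Prop) : SimpleGraph V where
  Adj x y := x ≠ y ∧ (D x y ∨ D y x)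
  symm := by constructor; intro x y h; exact ⟨h.1.symm, h.2.symm⟩
  loopless := by constructor; intro x h; exact h.1 rfl

/-!
If a vertex `v` is neither domination-forced nor location-forced, then every in-neighbourhood
contains a vertex other than `v`, and every nonempty symmetric difference of two
in-neighbourhoods does too. In a locatable digraph this makes `{v}ᶜ` an OLD set, so
`γ_OL(D) ≤ n - 1`.
-/

theorem Set.Nonempty.exists_mem_ne_of_ne_singleton {α : Type*} {s : Set α} {a : α}
    (hs : s.Nonempty) (hsa : s ≠ {a}) : ∃ x ∈ s, x ≠ a := by
  by_contra! h
  exact hsa (hs.subset_singleton_iff.mp h)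

theorem oldNum_le_ncard {V : Type*} {D : V → V → Prop} {S : Set V} (hS : IsOLD D S) :
    oldNum D ≤ S.ncard :=
  Nat.sInf_le ⟨S, hS, rfl⟩

theorem Locatable.isOLD_compl_singleton {V : Type*} {D : V → V → Prop} (hloc : Locatable D)
    {v : V} (hdom : ¬DomForced D v) (hlocf : ¬LocForced D v) : IsOLD D {v}ᶜ := by
  constructor
  · intro w
    obtain ⟨u, hu, huv⟩ := (hloc.1 w).exists_mem_ne_of_ne_singleton fun hw => hdom ⟨w, hw⟩
    exact ⟨u, huv, hu⟩
  · intro x y hxy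
    have hne : (Nin D x ∆ Nin D y).Nonempty :=
      Set.nonempty_iff_ne_empty.mpr fun h => hxy (hloc.2 x y (symmDiff_eq_bot.mp h))
    obtain ⟨s, hs, hsv⟩ := hne.exists_mem_ne_of_ne_singleton fun h => hlocf ⟨x, y, hxy, h⟩
    exact ⟨s, hsv, hs⟩

theorem stmt_1 {V : Type*} [Fintype V] (D : V → V → Prop) (hloc : Locatable D)
    (hext : oldNum D = Fintype.card V) :
    ∀ v, DomForced D v ∨ LocForced D v := by
  intro v
  by_contra! hv
  have hle : oldNum D ≤ Fintype.card V - 1 := by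
    calc oldNum D ≤ ({v}ᶜ : Set V).ncard :=
          oldNum_le_ncard (hloc.isOLD_compl_singleton hv.1 hv.2)
      _ = Fintype.card V - 1 := by
        rw [Set.ncard_compl, Set.ncard_singleton, Nat.card_eq_fintype_card]
  have hpos : 0 < Fintype.card V := Fintype.card_pos_iff.mpr ⟨v⟩
  omega
end

section
/- Every locatable digraph D of order n has at most n−1 location-forced vertices. -/
open scoped symmDiff

/-!
Over `𝔽₂`, if `N⁻(x) ∆ N⁻(y) = {v}` then the unit vector `e_v` is the difference of the indicator
vectors of `N⁻(x)` and `N⁻(y)`. So the unit vectors of the location-forced vertices are linearly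
independent vectors lying in the span of the differences of `n` indicator vectors (their
`vectorSpan`), which has dimension at most `n - 1`.
-/

open Module Submodule

theorem Set.indicator_symmDiff_one_eq_sub {α R : Type*} [Ring R] [CharP R 2] (s t : Set α) :
    (s ∆ t).indicator (1 : α → R) = s.indicator 1 - t.indicator 1 := by
  ext a
  by_cases hs : a ∈ s <;> by_cases ht : a ∈ t <;>
    simp [Set.mem_symmDiff, hs, ht, CharTwo.sub_eq_add]

theorem LinearIndepOn.encard_le_finrank {ι K M : Type*} [DivisionRing K] [AddCommGroup M]
    [Module K M] {v : ι → M} {s : Set ι} (hs : LinearIndepOn K v s) (T : Submodule K M)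
    [FiniteDimensional K T] (hsT : v '' s ⊆ T) : s.encard ≤ finrank K T :=
  calc s.encard = (Module.rank K (span K (v '' s))).toENat := (toENat_rank_span_set hs).symm
    _ ≤ (Module.rank K T).toENat := Cardinal.toENat.monotone' (rank_mono (span_le.2 hsT))
    _ = finrank K T := by rw [← finrank_eq_rank, Cardinal.toENat_nat]

theorem ncard_setOf_symmDiff_eq_singleton_le {ι α : Type*} [Fintype ι] (f : ι → Set α) :
    {a | ∃ x y, f x ∆ f y = {a}}.ncard ≤ Fintype.card ι - 1 := by
  classical
  obtain hι | ⟨n, hn⟩ : Fintype.card ι = 0 ∨ ∃ n, Fintype.card ι = n + 1 := by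
    rcases Fintype.card ι with _ | n <;> simp
  · have : IsEmpty ι := Fintype.card_eq_zero_iff.1 hι
    simp
  set S := {a | ∃ x y, f x ∆ f y = {a}}
  let χ : ι → α → ZMod 2 := fun i => (f i).indicator 1
  have hS : (fun a => Pi.single a (1 : ZMod 2)) '' S ⊆ vectorSpan (ZMod 2) (Set.range χ) := by
    rintro _ ⟨a, ⟨x, y, hxy⟩, rfl⟩
    have hsingle : Pi.single a (1 : ZMod 2) = χ x -ᵥ χ y := by
      rw [vsub_eq_sub, ← Set.indicator_symmDiff_one_eq_sub, hxy, Set.indicator_singleton,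
        Pi.one_apply]
    simp only [SetLike.mem_coe, hsingle]
    exact vsub_mem_vectorSpan _ (Set.mem_range_self x) (Set.mem_range_self y)
  have hS_encard : S.encard ≤ n :=
    calc S.encard ≤ finrank (ZMod 2) (vectorSpan (ZMod 2) (Set.range χ)) :=
          ((Pi.linearIndependent_single_one α (ZMod 2)).linearIndepOn S).encard_le_finrank _ hS
      _ ≤ n := by exact_mod_cast finrank_vectorSpan_range_le (ZMod 2) χ hn
  rw [hn, Nat.add_sub_cancel]
  exact (Set.encard_le_coe_iff_finite_ncard_le.1 hS_encard).2

theorem stmt_2_general {V : Type*} [Fintype V] (D : V → V → Prop) :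
    {v | LocForced D v}.ncard ≤ Fintype.card V - 1 :=
  calc {v | LocForced D v}.ncard ≤ {v | ∃ x y, Nin D x ∆ Nin D y = {v}}.ncard :=
        Set.ncard_le_ncard fun _ ⟨x, y, _, hxy⟩ => ⟨x, y, hxy⟩
    _ ≤ Fintype.card V - 1 := ncard_setOf_symmDiff_eq_singleton_le (Nin D)

theorem stmt_2 {V : Type*} [Fintype V] (D : V → V → Prop) (hloc : Locatable D) :
    {v | LocForced D v}.ncard ≤ Fintype.card V - 1 :=
  stmt_2_general D
end

section
/- Bondy's theorem: Let V be a set with n elements and A₁,...,Aₙ be n pairwise distinct subsets of V. Then there exists a subset X of V of size n−1 such that the sets A₁ ∩ X, ..., Aₙ ∩ X are still pairwise distinct. -/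
open scoped symmDiff

/-! If no point can be deleted, then for every `x` some two of the sets differ exactly in `x`.
Over `𝔽₂` the unit vector at `x` is then the difference of the indicator vectors of these two
sets, so the affine span of the `n` indicator vectors is all of `𝔽₂^V`, of dimension `n`; but `n`
points span an affine subspace of dimension at most `n - 1`. -/

theorem Set.symmDiff_eq_singleton_of_inter_compl_singleton_eq {V : Type*} {s t : Set V} {x : V}
    (hst : s ≠ t) (h : s ∩ {x}ᶜ = t ∩ {x}ᶜ) : s ∆ t = {x} := by
  have hsub : s ∆ t ⊆ {x} := by
    rw [← Set.disjoint_compl_right_iff_subset, Set.disjoint_iff_inter_eq_empty,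
      Set.inter_symmDiff_distrib_right, h, symmDiff_self, Set.bot_eq_empty]
  exact (Set.subset_singleton_iff_eq.1 hsub).resolve_left
    fun hempty => hst (symmDiff_eq_bot.1 hempty)

theorem Set.indicator_one_symmDiff_of_charTwo {V R : Type*} [Ring R] [CharP R 2] (s t : Set V) :
    (s ∆ t).indicator (1 : V → R) = s.indicator 1 - t.indicator 1 := by
  ext v
  by_cases hs : v ∈ s <;> by_cases ht : v ∈ t <;>
    simp [Set.indicator, Set.mem_symmDiff, hs, ht, CharTwo.neg_eq]

theorem card_lt_card_of_forall_exists_symmDiff_eq_singleton {ι V : Type*} [Fintype ι] [Nonempty ι]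
    [Fintype V] (A : ι → Set V) (h : ∀ x, ∃ i j, A i ∆ A j = {x}) :
    Fintype.card V < Fintype.card ι := by
  classical
  set W := vectorSpan (ZMod 2) (Set.range fun i => (A i).indicator (1 : V → ZMod 2))
  have hbasis : ∀ x, Pi.basisFun (ZMod 2) V x ∈ W := by
    intro x
    obtain ⟨i, j, hij⟩ := h x
    have hdiff : Pi.basisFun (ZMod 2) V x = (A i).indicator 1 - (A j).indicator 1 := by
      rw [← Set.indicator_one_symmDiff_of_charTwo, hij, Set.indicator_singleton, Pi.basisFun_apply,
        Pi.one_apply]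
    rw [hdiff]
    exact vsub_mem_vectorSpan _ (Set.mem_range_self i) (Set.mem_range_self j)
  have hW : W = ⊤ := by
    rw [eq_top_iff, ← (Pi.basisFun (ZMod 2) V).span_eq, Submodule.span_le]
    rintro _ ⟨x, rfl⟩
    exact hbasis x
  obtain ⟨m, hm⟩ := Nat.exists_eq_succ_of_ne_zero (Fintype.card_ne_zero (α := ι))
  have : Module.finrank (ZMod 2) W ≤ m := finrank_vectorSpan_range_le (ZMod 2) _ hm
  rw [hW, finrank_top, Module.finrank_fintype_fun_eq_card] at this
  omega

theorem exists_injective_inter_compl_singleton {ι V : Type*} [Fintype ι] [Nonempty ι] [Fintype V]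
    (A : ι → Set V) (hA : Function.Injective A) (hcard : Fintype.card ι ≤ Fintype.card V) :
    ∃ x, Function.Injective fun i => A i ∩ {x}ᶜ := by
  by_contra! hnot
  refine (card_lt_card_of_forall_exists_symmDiff_eq_singleton A fun x => ?_).not_ge hcard
  obtain ⟨i, j, hij, hne⟩ := Function.not_injective_iff.1 (hnot x)
  exact ⟨i, j, Set.symmDiff_eq_singleton_of_inter_compl_singleton_eq (hA.ne hne) hij⟩

theorem stmt_3 {V : Type*} [Fintype V] (n : ℕ) (hn : Fintype.card V = n)
    (A : Fin n → Set V) (hA : Function.Injective A) :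
    ∃ X : Set V, X.ncard = n - 1 ∧ Function.Injective (fun i => A i ∩ X) := by
  rcases n.eq_zero_or_pos with rfl | hpos
  · exact ⟨∅, by simp, fun i => i.elim0⟩
  have : Nonempty (Fin n) := Fin.pos_iff_nonempty.1 hpos
  obtain ⟨x, hx⟩ := exists_injective_inter_compl_singleton A hA (by rw [Fintype.card_fin, hn])
  refine ⟨{x}ᶜ, ?_, hx⟩
  rw [Set.ncard_compl, Set.ncard_singleton, Nat.card_eq_fintype_card, hn]
end

section
/- Let D be a locatable digraph of order n with γ_OL(D) = n, and define H(D) on vertex set V(D) with an arc from x to y whenever there exists a location-forced vertex v of D with N⁻(x) = N⁻(y) \ {v} and v ∈ N⁻(y). Then H(D) is acyclic and every vertex of H(D) has in-degree at most 1 (so H(D) is a disjoint union of rooted directed trees). -/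
open scoped symmDiff

/-!
Arcs of `H` strictly increase the in-degree, so `H` is acyclic. Since `γ_OL(D) = n`, no set
`V \ {c}` is OLD, so every vertex `c` is forced: some `N⁻(u)` is `P ∪ {c}` with `c ∉ P` and `P`
empty or another in-neighbourhood. Over `𝔽₂` this writes every unit vector through the `n`
in-neighbourhood vectors; inverting the resulting matrix identity shows that every `u` serves an
odd number of vertices `c`, so `c ↦ u` is a bijection. Two arcs `x → y`, `x' → y` of `H` would make
`y` serve two distinct vertices.
-/

open Function

section InsertWitness

variable {V : Type*} {N : V → Set V}

/-- `(u, P)` witnesses that `c` is forced by the set system `N`: `N u` is obtained by adding the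
new point `c` to `P`, which is empty or itself a member of the system. -/
def IsInsertWitness (N : V → Set V) (c u : V) (P : Set V) : Prop :=
  P ∈ insert ∅ (Set.range N) ∧ c ∉ P ∧ N u = insert c P

lemma exists_isInsertWitness_of_symmDiff_eq_singleton {A B : Set V} {c : V}
    (hA : A ∈ insert ∅ (Set.range N)) (hB : B ∈ insert ∅ (Set.range N)) (hAB : A ∆ B = {c}) :
    ∃ u P, IsInsertWitness N c u P := by
  have hc : c ∈ A ∆ B := by rw [hAB]; rfl
  wlog hcA : c ∈ A generalizing A B
  · exact this hB hA (symmDiff_comm A B ▸ hAB) (symmDiff_comm A B ▸ hc)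
      (by simpa [Set.mem_symmDiff, hcA] using hc)
  have hcB : c ∉ B := by simpa [Set.mem_symmDiff, hcA] using hc
  have hAeq : A = insert c B := by
    ext a
    have ha := Set.ext_iff.1 hAB a
    by_cases hac : a = c
    · subst hac; simp [hcA]
    · simp only [Set.mem_symmDiff, Set.mem_singleton_iff, hac, iff_false] at ha
      simp only [Set.mem_insert_iff, hac, false_or]
      tauto
  obtain ⟨u, rfl⟩ : A ∈ Set.range N :=
    (Set.mem_insert_iff.1 hA).resolve_left (Set.nonempty_of_mem hcA).ne_empty
  exact ⟨u, B, hB, hcB, hAeq⟩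

variable [Fintype V]

/- Over `ZMod 2`, with `M` the incidence matrix of `N`, the witnesses give `(Q - F) * M = 1`, where
`Q` records `c ↦ u` and `F` records `c ↦ (the index of P)`. Hence also `M * (Q - F) = 1`, and
the diagonal entry at `u` counts, mod 2, the `c` witnessed by `u`: there is at least one. -/
lemma surjective_of_isInsertWitness (hN : Injective N) {q : V → V} {P : V → Set V}
    (hw : ∀ c, IsInsertWitness N c (q c) (P c)) : Surjective q := by
  classical
  let M : Matrix V V (ZMod 2) := fun u a => if a ∈ N u then 1 else 0
  let Q : Matrix V V (ZMod 2) := fun c u => if q c = u then 1 else 0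
  let F : Matrix V V (ZMod 2) := fun c u => if N u = P c then 1 else 0
  have hFM : ∀ c a, (F * M) c a = if a ∈ P c then 1 else 0 := by
    intro c a
    rcases Set.mem_insert_iff.1 (hw c).1 with hP | ⟨w, hw⟩
    · rw [Matrix.mul_apply]
      refine (Finset.sum_eq_zero fun u _ => ?_).trans (by simp [hP])
      by_cases hu : N u = P c
      · simp [M, hu, hP]
      · simp [F, hu]
    · rw [Matrix.mul_apply]
      simp only [F, M, ← hw, hN.eq_iff, ite_mul, one_mul, zero_mul, Finset.sum_ite_eq',
        Finset.mem_univ, if_true]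
  have hQM : ∀ c a, (Q * M) c a = if a ∈ N (q c) then 1 else 0 := by
    intro c a
    rw [Matrix.mul_apply]
    simp only [Q, M, ite_mul, one_mul, zero_mul, Finset.sum_ite_eq, Finset.mem_univ, if_true]
  have hinv : (Q - F) * M = 1 := by
    ext c a
    rw [Matrix.sub_mul, Matrix.sub_apply, hFM, hQM, (hw c).2.2, Matrix.one_apply]
    by_cases hac : a = c
    · subst hac; simp [(hw a).2.1]
    · by_cases ha : a ∈ P c <;> simp [hac, ha, Ne.symm hac]
  intro u
  have hinv' : M * (Q - F) = 1 := mul_eq_one_comm.1 hinv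
  have hdiag := congrFun (congrFun hinv' u) u
  rw [Matrix.mul_apply, Matrix.one_apply_eq] at hdiag
  have hterm : ∀ c, M u c * (Q - F) c u = Q c u := by
    intro c
    rw [Matrix.sub_apply]
    by_cases hc : c ∈ N u
    · have hF : ¬ N u = P c := fun h => (hw c).2.1 (h ▸ hc)
      simp [M, F, hc, hF]
    · have hq : q c ≠ u := fun h => hc (h ▸ (hw c).2.2 ▸ Set.mem_insert c _)
      simp [M, Q, hc, hq]
  by_contra! hu
  simp [hterm, Q, hu] at hdiag

lemma IsInsertWitness.eq_of_forall (hN : Injective N) (hall : ∀ c, ∃ u P, IsInsertWitness N c u P)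
    {c c' u : V} {P P' : Set V} (h : IsInsertWitness N c u P) (h' : IsInsertWitness N c' u P') :
    c = c' := by
  classical
  by_contra hne
  choose q₀ P₀ hw₀ using hall
  let q := update (update q₀ c u) c' u
  let P := update (update P₀ c P) c' P'
  have hw : ∀ a, IsInsertWitness N a (q a) (P a) := by
    intro a
    by_cases ha' : a = c'
    · subst ha'; simpa [q, P] using h'
    by_cases ha : a = c
    · subst ha; simpa [q, P, ha'] using h
    simpa [q, P, ha, ha'] using hw₀ a
  have hq := Finite.injective_iff_surjective.2 (surjective_of_isInsertWitness hN hw)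
  exact hne (hq (by simp [q, update_of_ne hne]))

end InsertWitness

section Extremal

variable {V : Type*} {D : V → V → Prop}

lemma isOLD_compl_singleton (hloc : Locatable D) {c : V}
    (hc : ∀ A ∈ insert ∅ (Set.range (Nin D)), ∀ B ∈ insert ∅ (Set.range (Nin D)), A ∆ B ≠ {c}) :
    IsOLD D {c}ᶜ := by
  refine ⟨fun w => ?_, fun x y hxy => ?_⟩
  · by_contra! hw
    have hNw : Nin D w = {c} :=
      (Set.subset_singleton_iff_eq.1 fun u hu => not_not.1 (hw u · hu)).resolve_left
        (hloc.1 w).ne_empty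
    exact hc _ (Or.inr ⟨w, rfl⟩) ∅ (Or.inl rfl) (by simp [hNw])
  · have hne : Nin D x ∆ Nin D y ≠ ∅ := fun h => hxy (hloc.2 x y (symmDiff_eq_bot.1 h))
    have hsub : ¬ Nin D x ∆ Nin D y ⊆ {c} := fun h =>
      (Set.subset_singleton_iff_eq.1 h).elim hne (hc _ (Or.inr ⟨x, rfl⟩) _ (Or.inr ⟨y, rfl⟩))
    obtain ⟨s, hs, hsc⟩ := Set.not_subset.1 hsub
    exact ⟨s, hsc, hs⟩

variable [Fintype V]

lemma oldNum_lt_card_of_isOLD {S : Set V} (hS : IsOLD D S) (hSV : S ≠ Set.univ) :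
    oldNum D < Fintype.card V :=
  calc oldNum D ≤ S.ncard := Nat.sInf_le ⟨S, hS, rfl⟩
    _ < Nat.card V := Set.ncard_lt_card hSV
    _ = Fintype.card V := Nat.card_eq_fintype_card

lemma exists_isInsertWitness_of_oldNum_eq_card (hloc : Locatable D)
    (hext : oldNum D = Fintype.card V) (c : V) : ∃ u P, IsInsertWitness (Nin D) c u P := by
  by_contra hno
  refine (oldNum_lt_card_of_isOLD (isOLD_compl_singleton (c := c) hloc ?_) ?_).ne hext
  · intro A hA B hB hAB
    exact hno (exists_isInsertWitness_of_symmDiff_eq_singleton hA hB hAB)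
  · exact fun h => (Set.ext_iff.1 h c).2 trivial rfl

end Extremal

lemma isInsertWitness_of_eq_diff_singleton {V : Type*} {D : V → V → Prop} {x y v : V}
    (hv : v ∈ Nin D y) (hxy : Nin D x = Nin D y \ {v}) :
    IsInsertWitness (Nin D) v y (Nin D x) :=
  ⟨Or.inr ⟨x, rfl⟩, by simp [hxy], by rw [hxy, Set.insert_sdiff_singleton, Set.insert_eq_of_mem hv]⟩

theorem stmt_8 {V : Type*} [Fintype V] (D : V → V → Prop) (hloc : Locatable D)
    (hext : oldNum D = Fintype.card V) (H : V → V → Prop)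
    (hH : ∀ x y, H x y ↔ ∃ v, LocForced D v ∧ v ∈ Nin D y ∧ Nin D x = Nin D y \ {v}) :
    (∀ x, ¬ Relation.TransGen H x x) ∧ ∀ x x' y, H x y → H x' y → x = x' := by
  have hlt : ∀ x y, H x y → (Nin D x).ncard < (Nin D y).ncard := by
    intro x y hxy
    obtain ⟨v, -, hv, hx⟩ := (hH x y).1 hxy
    exact hx ▸ Set.ncard_sdiff_singleton_lt_of_mem hv
  refine ⟨fun x hx => ?_, fun x x' y hxy hx'y => ?_⟩
  · have := Relation.TransGen.lift (p := (· < ·)) _ hlt x x hx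
    exact lt_irrefl _ (Relation.transGen_eq_self (r := (· < · : ℕ → ℕ → Prop)) ▸ this)
  · obtain ⟨v, -, hv, hx⟩ := (hH x y).1 hxy
    obtain ⟨v', -, hv', hx'⟩ := (hH x' y).1 hx'y
    have hvv' : v = v' :=
      (isInsertWitness_of_eq_diff_singleton hv hx).eq_of_forall hloc.2
        (exists_isInsertWitness_of_oldNum_eq_card hloc hext)
        (isInsertWitness_of_eq_diff_singleton hv' hx')
    exact hloc.2 x x' (by rw [hx, hx', hvv'])
end

section
/- Let D be a connected, symmetric, loop-free, locatable digraph with γ_OL(D) = |V(D)|. Then every directed cycle formed by the forcing arcs of D has length exactly 2. -/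
open scoped symmDiff

/-! In a symmetric digraph two consecutive forcing arcs `x → y → w` force `w = x`: if `N(y) = {x}`
this is immediate, and otherwise `N(z) = N(y) \ {x}` for some `z`, so `w ≠ x` would put `z` in
`N(w)`, which neither `N(w) = {y}` nor `N(z') = N(w) \ {y}` allows. Hence a forcing cycle
`f : ZMod n → V` satisfies `f (i + 2) = f i`, so `n ∣ 2` by injectivity, and loop-freeness rules
out `n = 1`. -/

theorem Set.eq_diff_singleton_of_symmDiff_eq_singleton {α : Type*} {A B : Set α} {x : α}
    (h : A ∆ B = {x}) (hx : x ∈ A) : B = A \ {x} := by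
  ext w
  have hw := Set.ext_iff.mp h w
  rw [Set.mem_symmDiff, Set.mem_singleton_iff] at hw
  rw [Set.mem_sdiff, Set.mem_singleton_iff]
  rcases eq_or_ne w x with rfl | hwx <;> tauto

namespace ForcingArc

variable {V : Type*} {D : V → V → Prop} {x y w : V}

theorem mem_nin (h : ForcingArc D x y) : x ∈ Nin D y := by
  rcases h with h | ⟨_, _, hx⟩
  · exact h ▸ Set.mem_singleton x
  · exact hx

theorem eq_of_forcingArc (hsym : ∀ x y, D x y → D y x) (hxy : ForcingArc D x y)
    (hyw : ForcingArc D y w) : w = x := by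
  have hwy : w ∈ Nin D y := hsym y w hyw.mem_nin
  rcases hxy with hy | ⟨z, hz, hxy⟩
  · exact Set.mem_singleton_iff.mp (hy ▸ hwy)
  by_contra hwx
  have hNz : Nin D z = Nin D y \ {x} := Set.eq_diff_singleton_of_symmDiff_eq_singleton hz hxy
  have hzw : z ∈ Nin D w := hsym w z (show w ∈ Nin D z from hNz ▸ ⟨hwy, hwx⟩)
  have hzy : z ≠ y := by
    rintro rfl
    exact (hNz ▸ hxy).2 rfl
  rcases hyw with hw | ⟨z', hz', hyw⟩
  · exact hzy (Set.mem_singleton_iff.mp (hw ▸ hzw))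
  have hNz' : Nin D z' = Nin D w \ {y} := Set.eq_diff_singleton_of_symmDiff_eq_singleton hz' hyw
  have hz'z : z' ∈ Nin D z := hsym z z' (show z ∈ Nin D z' from hNz' ▸ ⟨hzw, hzy⟩)
  have hyz' : y ∈ Nin D z' := hsym z' y (show z' ∈ Nin D y \ {x} from hNz ▸ hz'z).1
  exact (hNz' ▸ hyz').2 rfl

end ForcingArc

theorem stmt_12_general {V : Type*} (D : V → V → Prop)
    (hsym : ∀ x y, D x y → D y x)
    (hloopfree : ∀ v, ¬ D v v) :
    ∀ n : ℕ, 0 < n → ∀ f : ZMod n → V, Function.Injective f →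
      (∀ i, ForcingArc D (f i) (f (i + 1))) → n = 2 := by
  intro n _ f hf harc
  have harc₀ := harc 0
  have harc₁ := harc 1
  rw [zero_add] at harc₀
  rw [one_add_one_eq_two] at harc₁
  have hone : ¬ n ∣ 1 := by
    rw [← ZMod.natCast_eq_zero_iff, Nat.cast_one]
    intro h
    exact hloopfree (f 0) (h ▸ harc₀.mem_nin)
  have htwo : n ∣ 2 := by
    rw [← ZMod.natCast_eq_zero_iff, Nat.cast_ofNat]
    exact hf (harc₀.eq_of_forcingArc hsym harc₁)
  exact ((Nat.dvd_prime Nat.prime_two).mp htwo).resolve_left fun h ↦ hone (dvd_of_eq h)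

theorem stmt_12 {V : Type*} [Fintype V] (D : V → V → Prop)
    (hconn : (underlying D).Connected) (hsym : ∀ x y, D x y → D y x)
    (hloopfree : ∀ v, ¬ D v v) (hloc : Locatable D)
    (hext : oldNum D = Fintype.card V) :
    ∀ n : ℕ, 0 < n → ∀ f : ZMod n → V, Function.Injective f →
      (∀ i, ForcingArc D (f i) (f (i + 1))) → n = 2 :=
  stmt_12_general D hsym hloopfree
end
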